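/- arXiv:2001.09361 — 3 statements merged into one kernel-verified Lean document; each statement's English description precedes it below -/
import Mathlib

section
/- Let J : A × A → A be a Jordan biderivation with J(e, e) = 0. Then for all a ∈ A₁₁, b ∈ A₂₂ and m ∈ A₁₂: J(a, m) = aJ(e, m) + J(e, m)a, J(m, a) = aJ(m, e) + J(m, e)a, J(b, m) = bJ(e', m) + J(e', m)b, and J(m, b) = bJ(m, e') + J(m, e')b. -/
/-!
Write `2a = ea + ae`, `m = em + me` and apply the polarized Jordan identities: with `v = J(e, m)`,
`w = J(a, e)` and `u = J(a, m)` they give `2u = eu + ue + av + va`, `u = eu + ue + mw + wm`,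
`v = ev + ve` and `2w = ew + we`. The last two force `eve = 0` and `ew = ewe = we`, and
then the second relation forces `eue = 0`. Multiplying the first relation by `e` on either side
now gives `eu = av` and `ue = va`, so `2u = 2(av + va)`. The other three identities are the same
argument for the flipped biderivation `(x, y) ↦ J(y, x)` and for the idempotent `e' = 1 - e`.
-/

structure IsJordanBiderivation {R A : Type*} [CommRing R] [Ring A] [Algebra R A]
    (J : A →ₗ[R] A →ₗ[R] A) : Prop where
  map_mul_self_left : ∀ x y : A, J (x * x) y = x * J x y + J x y * x
  map_mul_self_right : ∀ x y : A, J x (y * y) = y * J x y + J x y * y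

section PeirceRing

variable {A : Type*} [Ring A] {f x : A}

theorem IsIdempotentElem.mul_mul_eq_zero_of_eq_mul_add_mul (hf : IsIdempotentElem f)
    (h : x = f * x + x * f) : f * x * f = 0 := by
  refine add_left_cancel (a := f * x * f) ?_
  linear_combination (norm := noncomm_ring) -(f * h * f + hf.eq * x * f + f * x * hf.eq)

theorem IsIdempotentElem.mul_eq_mul_mul_of_add_self_eq (hf : IsIdempotentElem f)
    (h : x + x = f * x + x * f) : f * x = f * x * f ∧ x * f = f * x * f := by
  constructor
  · refine add_left_cancel (a := f * x) ?_
    linear_combination (norm := noncomm_ring) f * h + hf.eq * x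
  · refine add_left_cancel (a := x * f) ?_
    linear_combination (norm := noncomm_ring) h * f + x * hf.eq

-- `m ∈ fA(1 - f) + (1 - f)Af`, the sum of the two off-diagonal Peirce components of `f`.
def IsPeirceOffDiag (f m : A) : Prop :=
  f * m * f = 0 ∧ f * m + m * f = m

theorem IsPeirceOffDiag.one_sub {m : A} (hm : IsPeirceOffDiag f m) :
    IsPeirceOffDiag (1 - f) m := by
  constructor
  · linear_combination (norm := noncomm_ring) hm.1 - hm.2
  · linear_combination (norm := noncomm_ring) -hm.2

theorem IsIdempotentElem.isPeirceOffDiag_of_mul_mul_one_sub (hf : IsIdempotentElem f) {m : A}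
    (hm : f * m * (1 - f) = m) : IsPeirceOffDiag f m := by
  have hfm : f * m = m := by
    rw [← hm, ← mul_assoc, ← mul_assoc, hf.eq]
  have hmf : m * f = 0 := by
    rw [← hm, mul_assoc, sub_mul, one_mul, hf.eq, sub_self, mul_zero]
  exact ⟨by rw [mul_assoc, hmf, mul_zero], by rw [hfm, hmf, add_zero]⟩

end PeirceRing

namespace IsJordanBiderivation

variable {R A : Type*} [CommRing R] [Ring A] [Algebra R A] {J : A →ₗ[R] A →ₗ[R] A}

theorem flip (hJ : IsJordanBiderivation J) : IsJordanBiderivation J.flip :=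
  ⟨fun x y => hJ.map_mul_self_right y x, fun x y => hJ.map_mul_self_left y x⟩

theorem map_jordan_left (hJ : IsJordanBiderivation J) (x y z : A) :
    J (x * y + y * x) z = x * J y z + J y z * x + y * J x z + J x z * y := by
  have h := hJ.map_mul_self_left (x + y) z
  rw [show (x + y) * (x + y) = x * x + (x * y + y * x) + y * y by noncomm_ring] at h
  simp only [map_add, LinearMap.add_apply, hJ.map_mul_self_left] at h ⊢
  linear_combination (norm := noncomm_ring) h

theorem map_jordan_right (hJ : IsJordanBiderivation J) (x y z : A) :
    J z (x * y + y * x) = x * J z y + J z y * x + y * J z x + J z x * y :=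
  hJ.flip.map_jordan_left x y z

theorem map_one_left (hJ : IsJordanBiderivation J) (y : A) : J 1 y = 0 := by
  have h := hJ.map_mul_self_left 1 y
  rw [one_mul, one_mul, mul_one] at h
  exact left_eq_add.mp h

theorem map_one_sub_one_sub (hJ : IsJordanBiderivation J) {e : A} (he : J e e = 0) :
    J (1 - e) (1 - e) = 0 := by
  have h1 : ∀ y, J y 1 = 0 := hJ.flip.map_one_left
  simp [hJ.map_one_left, h1, he]

theorem apply_eq_of_isPeirceOffDiag (hJ : IsJordanBiderivation J)
    (htf : ∀ x : A, x + x = 0 → x = 0) {f : A} (hf : IsIdempotentElem f) (hJf : J f f = 0)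
    {a m : A} (ha : f * a * f = a) (hm : IsPeirceOffDiag f m) :
    J a m = a * J f m + J f m * a := by
  obtain ⟨hm, hm'⟩ := hm
  have hfa : f * a = a := by rw [← ha, ← mul_assoc, ← mul_assoc, hf.eq]
  have haf : a * f = a := by rw [← ha, mul_assoc, hf.eq]
  set u := J a m
  set v := J f m
  set w := J a f
  have hv : f * v * f = 0 := by
    refine hf.mul_mul_eq_zero_of_eq_mul_add_mul ?_
    simpa only [hf.eq] using hJ.map_mul_self_left f m
  have hw : f * w = f * w * f ∧ w * f = f * w * f := by
    refine hf.mul_eq_mul_mul_of_add_self_eq ?_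
    simpa [hfa, haf, hJf] using hJ.map_jordan_left f a f
  have hu_right : u = f * u + u * f + m * w + w * m := by
    simpa only [hm'] using hJ.map_jordan_right f m a
  -- `f m w f = f m f w f` and `f w m f = f w f m f`, both zero
  have hfuf : f * u * f = 0 := by
    refine add_left_cancel (a := f * u * f) ?_
    linear_combination (norm := noncomm_ring)
      -(f * hu_right * f + hf.eq * u * f + f * u * hf.eq + f * m * hw.2 + hm * (w * f)
        + hw.1 * (m * f) + f * w * hm)
  have hu_left : u + u = f * u + u * f + a * v + v * a := by
    simpa [hfa, haf] using hJ.map_jordan_left f a m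
  have hfu : f * u = a * v := add_left_cancel (a := f * u) <| by
    linear_combination (norm := noncomm_ring)
      f * hu_left + hf.eq * u + hfuf + hfa * v - f * v * hfa + hv * a
  have huf : u * f = v * a := add_left_cancel (a := u * f) <| by
    linear_combination (norm := noncomm_ring)
      hu_left * f + u * hf.eq + hfuf + v * haf - haf * (v * f) + a * hv
  exact sub_eq_zero.mp <| htf _ <| by
    linear_combination (norm := noncomm_ring) hu_left + hfu + huf

end IsJordanBiderivation

theorem jordan_biderivation_components_with_m_general
    (R A : Type*) [CommRing R] [Ring A] [Algebra R A]
    -- `A` is 2-torsion free: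
    (htf : ∀ x : A, x + x = 0 → x = 0)
    -- `e` is a nontrivial idempotent:
    (e : A) (he : e * e = e)
    (J : A →ₗ[R] A →ₗ[R] A)
    -- `J` is a Jordan biderivation:
    (hJ1 : ∀ x y : A, J (x * x) y = x * J x y + J x y * x)
    (hJ2 : ∀ x y : A, J x (y * y) = y * J x y + J x y * y)
    -- `J(e, e) = 0`:
    (hJe : J e e = 0) :
    ∀ a b m : A,
      e * a * e = a → (1 - e) * b * (1 - e) = b → e * m * (1 - e) = m →
      J a m = a * J e m + J e m * a ∧
      J m a = a * J m e + J m e * a ∧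
      J b m = b * J (1 - e) m + J (1 - e) m * b ∧
      J m b = b * J m (1 - e) + J m (1 - e) * b := by
  intro a b m ha hb hm
  have hJ : IsJordanBiderivation J := ⟨hJ1, hJ2⟩
  have he' : IsIdempotentElem e := he
  have hJe' : J (1 - e) (1 - e) = 0 := hJ.map_one_sub_one_sub hJe
  have hm_e : IsPeirceOffDiag e m := he'.isPeirceOffDiag_of_mul_mul_one_sub hm
  exact ⟨hJ.apply_eq_of_isPeirceOffDiag htf he' hJe ha hm_e,
    hJ.flip.apply_eq_of_isPeirceOffDiag htf he' hJe ha hm_e,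
    hJ.apply_eq_of_isPeirceOffDiag htf he'.one_sub hJe' hb hm_e.one_sub,
    hJ.flip.apply_eq_of_isPeirceOffDiag htf he'.one_sub hJe' hb hm_e.one_sub⟩

/-- Let `J : A × A → A` be a Jordan biderivation with `J(e,e) = 0`.
Then for all `a ∈ A₁₁ = eAe`, `b ∈ A₂₂ = e'Ae'` and `m ∈ A₁₂ = eAe'` (`e' = 1 - e`):
`J(a,m) = aJ(e,m) + J(e,m)a`, `J(m,a) = aJ(m,e) + J(m,e)a`,
`J(b,m) = bJ(e',m) + J(e',m)b`, and `J(m,b) = bJ(m,e') + J(m,e')b`. -/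
theorem jordan_biderivation_components_with_m
    (R A : Type*) [CommRing R] [Ring A] [Algebra R A]
    -- `A` is 2-torsion free:
    (htf : ∀ x : A, x + x = 0 → x = 0)
    -- `e` is a nontrivial idempotent:
    (e : A) (he : e * e = e) (he0 : e ≠ 0) (he1 : e ≠ 1)
    (J : A →ₗ[R] A →ₗ[R] A)
    -- `J` is a Jordan biderivation:
    (hJ1 : ∀ x y : A, J (x * x) y = x * J x y + J x y * x)
    (hJ2 : ∀ x y : A, J x (y * y) = y * J x y + J x y * y)
    -- `J(e, e) = 0`:
    (hJe : J e e = 0) :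
    ∀ a b m : A,
      e * a * e = a → (1 - e) * b * (1 - e) = b → e * m * (1 - e) = m →
      J a m = a * J e m + J e m * a ∧
      J m a = a * J m e + J m e * a ∧
      J b m = b * J (1 - e) m + J (1 - e) m * b ∧
      J m b = b * J m (1 - e) + J m (1 - e) * b :=
  jordan_biderivation_components_with_m_general R A htf e he J hJ1 hJ2 hJe
end

section
/- Let J : A × A → A be a Jordan biderivation with J(e, e) = 0. Then for all a, a' ∈ A₁₁ and m ∈ A₁₂: eJ(m, e)e = 0, J(am, e) = aJ(m, e) + J(m, e)a, J(a, a')m = [a', a]J(m, e), and J(m, e)[a, a'] = 0. -/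
/-!
Everything is read off Peirce components of the polarized identities
`J(xz + zx, y) = xJ(z,y) + J(x,y)z + zJ(x,y) + J(z,y)x` and its mirror in the second slot.
Taking `y = e` gives `J(x,e) = eJ(x,e) + J(x,e)e`, so `J(m,e)` has no `A₁₁` (or `A₂₂`) part and
`J(a,e) = 0` for `a ∈ A₁₁`; polarizing the second slot at `e` and `a' ∈ A₁₁` pins down the
off-diagonal parts of `J(x,a')` and, by 2-torsion freeness, puts `J(a,a')` into `eA`.
The last two relations come from computing the `A₁₂` and `A₂₁` parts of `J(am,a')` in two ways:
through `J(am,e) = aJ(m,e) + J(m,e)a`, and through `J(am,a') = aJ(m,a') + J(a,a')m + J(m,a')a`.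
-/

namespace IsIdempotentElem

variable {A : Type*} [Ring A] {e : A}

theorem mul_eq_of_mul_mul_eq (he : IsIdempotentElem e) {a : A} (ha : e * a * e = a) :
    e * a = a := by
  rw [← ha, ← mul_assoc, ← mul_assoc, he.eq]

theorem mul_eq_of_mul_mul_eq' (he : IsIdempotentElem e) {a : A} (ha : e * a * e = a) :
    a * e = a := by
  rw [← ha, mul_assoc, he.eq]

theorem mul_eq_zero_of_mul_mul_one_sub_eq (he : IsIdempotentElem e) {m : A}
    (hm : e * m * (1 - e) = m) : m * e = 0 := by
  rw [← hm, mul_assoc, sub_mul, he.eq, one_mul, sub_self, mul_zero]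

theorem mul_mul_eq_zero_of_eq_add (he : IsIdempotentElem e) {x : A}
    (hx : x = e * x + x * e) : e * x * e = 0 := by
  linear_combination (norm := noncomm_ring) -(e * hx * e) - he.eq * (x * e) - e * x * he.eq

theorem mul_mul_one_sub_eq_of_add_self_eq (he : IsIdempotentElem e) {x z : A}
    (hx : x + x = e * x + x * e + z) : e * x * (1 - e) = e * z * (1 - e) := by
  linear_combination (norm := noncomm_ring) e * hx * (1 - e) + he.eq * (x * (1 - e))
    - e * x * he.eq

theorem one_sub_mul_mul_eq_of_add_self_eq (he : IsIdempotentElem e) {x z : A}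
    (hx : x + x = e * x + x * e + z) : (1 - e) * x * e = (1 - e) * z * e := by
  linear_combination (norm := noncomm_ring) (1 - e) * hx * e - he.eq * (x * e)
    + (1 - e) * x * he.eq

theorem mul_eq_of_add_self_eq (htf : ∀ x : A, x + x = 0 → x = 0)
    (he : IsIdempotentElem e) {x : A} (hx : x + x = e * x + x * e) : e * x = x := by
  have hx' : x + x = e * x + x * e + 0 := by rw [hx, add_zero]
  have h21 : (1 - e) * x * e = 0 := by
    simpa using he.one_sub_mul_mul_eq_of_add_self_eq hx'
  have h22 : (1 - e) * x * (1 - e) = 0 := htf _ <| by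
    linear_combination (norm := noncomm_ring) (1 - e) * hx * (1 - e)
      - he.eq * (x * (1 - e)) - ((1 - e) * x) * he.eq
  linear_combination (norm := noncomm_ring) -h21 - h22

end IsIdempotentElem

structure IsJordanBiderivation_s13 {R A : Type*} [CommSemiring R] [Ring A] [Module R A]
    (J : A →ₗ[R] A →ₗ[R] A) : Prop where
  map_mul_self_left : ∀ x y : A, J (x * x) y = x * J x y + J x y * x
  map_mul_self_right : ∀ x y : A, J x (y * y) = y * J x y + J x y * y

namespace IsJordanBiderivation_s13

variable {R A : Type*} [CommSemiring R] [Ring A] [Module R A] {J : A →ₗ[R] A →ₗ[R] A}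

theorem map_add_mul_left (hJ : IsJordanBiderivation_s13 J) (x z y : A) :
    J (x * z + z * x) y = x * J z y + J x y * z + z * J x y + J z y * x := by
  have h := hJ.map_mul_self_left (x + z) y
  simp only [add_mul, mul_add, map_add, LinearMap.add_apply] at h ⊢
  linear_combination (norm := noncomm_ring)
    h - hJ.map_mul_self_left x y - hJ.map_mul_self_left z y

theorem map_add_mul_right (hJ : IsJordanBiderivation_s13 J) (x y z : A) :
    J x (y * z + z * y) = y * J x z + J x y * z + z * J x y + J x z * y := by
  have h := hJ.map_mul_self_right x (y + z)
  simp only [add_mul, mul_add, map_add] at h ⊢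
  linear_combination (norm := noncomm_ring)
    h - hJ.map_mul_self_right x y - hJ.map_mul_self_right x z

variable {e : A}

theorem apply_idempotent (hJ : IsJordanBiderivation_s13 J) (he : IsIdempotentElem e) (x : A) :
    J x e = e * J x e + J x e * e := by
  simpa only [he.eq] using hJ.map_mul_self_right x e

theorem apply_corner_idempotent_eq_zero (hJ : IsJordanBiderivation_s13 J) (he : IsIdempotentElem e)
    (hJe : J e e = 0) {a : A} (ha : e * a * e = a) : J a e = 0 := by
  have h := hJ.map_add_mul_left e a e
  rw [he.mul_eq_of_mul_mul_eq ha, he.mul_eq_of_mul_mul_eq' ha, hJe, zero_mul, mul_zero,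
    add_zero, add_zero, map_add, LinearMap.add_apply, ← hJ.apply_idempotent he] at h
  simpa using h

/-- Polarizing `J(x, ·)` at `e` and `a ∈ eAe`, using `ea + ae = 2a`. -/
theorem apply_corner_add_self (hJ : IsJordanBiderivation_s13 J) (he : IsIdempotentElem e)
    (x : A) {a : A} (ha : e * a * e = a) :
    J x a + J x a = e * J x a + J x a * e + (J x e * a + a * J x e) := by
  have h := hJ.map_add_mul_right x e a
  rw [he.mul_eq_of_mul_mul_eq ha, he.mul_eq_of_mul_mul_eq' ha, map_add] at h
  rw [h]; abel

theorem mul_apply_corner_mul_one_sub (hJ : IsJordanBiderivation_s13 J) (he : IsIdempotentElem e)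
    (x : A) {a : A} (ha : e * a * e = a) :
    e * J x a * (1 - e) = a * J x e * (1 - e) := by
  rw [he.mul_mul_one_sub_eq_of_add_self_eq (hJ.apply_corner_add_self he x ha)]
  have hea := he.mul_eq_of_mul_mul_eq ha
  have hae := he.mul_eq_of_mul_mul_eq' ha
  linear_combination (norm := noncomm_ring) hea * J x e * (1 - e) - e * J x e * hae

theorem one_sub_mul_apply_corner_mul (hJ : IsJordanBiderivation_s13 J) (he : IsIdempotentElem e)
    (x : A) {a : A} (ha : e * a * e = a) :
    (1 - e) * J x a * e = (1 - e) * J x e * a := by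
  rw [he.one_sub_mul_mul_eq_of_add_self_eq (hJ.apply_corner_add_self he x ha)]
  have hea := he.mul_eq_of_mul_mul_eq ha
  have hae := he.mul_eq_of_mul_mul_eq' ha
  linear_combination (norm := noncomm_ring) (1 - e) * J x e * hae - hea * J x e * e

theorem mul_apply_corner_corner (hJ : IsJordanBiderivation_s13 J)
    (htf : ∀ x : A, x + x = 0 → x = 0) (he : IsIdempotentElem e) (hJe : J e e = 0)
    {a a' : A} (ha : e * a * e = a) (ha' : e * a' * e = a') : e * J a a' = J a a' := by
  refine he.mul_eq_of_add_self_eq htf ?_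
  simpa only [hJ.apply_corner_idempotent_eq_zero he hJe ha, zero_mul, mul_zero, add_zero]
    using hJ.apply_corner_add_self he a ha'

theorem apply_mul_idempotent (hJ : IsJordanBiderivation_s13 J) (he : IsIdempotentElem e)
    (hJe : J e e = 0) {a m : A} (ha : e * a * e = a) (hm : e * m * (1 - e) = m) :
    J (a * m) e = a * J m e + J m e * a := by
  have hma : m * a = 0 := by
    rw [← he.mul_eq_of_mul_mul_eq ha, ← mul_assoc, he.mul_eq_zero_of_mul_mul_one_sub_eq hm,
      zero_mul]
  simpa only [hma, hJ.apply_corner_idempotent_eq_zero he hJe ha, add_zero, zero_mul, mul_zero]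
    using hJ.map_add_mul_left a m e

theorem apply_mul_corner (hJ : IsJordanBiderivation_s13 J)
    (htf : ∀ x : A, x + x = 0 → x = 0) (he : IsIdempotentElem e) (hJe : J e e = 0)
    {a a' m : A} (ha : e * a * e = a) (ha' : e * a' * e = a') (hm : e * m * (1 - e) = m) :
    J (a * m) a' = a * J m a' + J a a' * m + J m a' * a := by
  have hme := he.mul_eq_zero_of_mul_mul_one_sub_eq hm
  have hma : m * a = 0 := by
    rw [← he.mul_eq_of_mul_mul_eq ha, ← mul_assoc, hme, zero_mul]
  have hmP : m * J a a' = 0 := by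
    rw [← hJ.mul_apply_corner_corner htf he hJe ha ha', ← mul_assoc, hme, zero_mul]
  simpa only [hma, hmP, add_zero, zero_add] using hJ.map_add_mul_left a m a'

theorem apply_corner_mul (hJ : IsJordanBiderivation_s13 J)
    (htf : ∀ x : A, x + x = 0 → x = 0) (he : IsIdempotentElem e) (hJe : J e e = 0)
    {a a' m : A} (ha : e * a * e = a) (ha' : e * a' * e = a') (hm : e * m * (1 - e) = m) :
    J a a' * m = (a' * a - a * a') * J m e := by
  have hea := he.mul_eq_of_mul_mul_eq ha
  have hae := he.mul_eq_of_mul_mul_eq' ha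
  have ha'e := he.mul_eq_of_mul_mul_eq' ha'
  have hme := he.mul_eq_zero_of_mul_mul_one_sub_eq hm
  have hmf : m * (1 - e) = m := by rw [mul_sub, mul_one, hme, sub_zero]
  have haf : a * (1 - e) = 0 := by rw [mul_sub, mul_one, hae, sub_self]
  have hKe := he.mul_mul_eq_zero_of_eq_add (hJ.apply_idempotent he m)
  have hPe := hJ.mul_apply_corner_corner htf he hJe ha ha'
  have hW₁ : e * J (a * m) a' * (1 - e) = a' * a * J m e * (1 - e) := by
    rw [hJ.mul_apply_corner_mul_one_sub he (a * m) ha', hJ.apply_mul_idempotent he hJe ha hm]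
    linear_combination (norm := noncomm_ring) a' * J m e * haf
  have hW₂ : e * J (a * m) a' * (1 - e) = a * a' * J m e * (1 - e) + J a a' * m := by
    rw [hJ.apply_mul_corner htf he hJe ha ha' hm]
    linear_combination (norm := noncomm_ring) hea * (J m a' * (1 - e)) - hae * (J m a' * (1 - e))
      + a * hJ.mul_apply_corner_mul_one_sub he m ha' + hPe * (m * (1 - e)) + J a a' * hmf
      + e * J m a' * haf
  linear_combination (norm := noncomm_ring) hW₁ - hW₂ + a * a' * hKe
    - a * ha'e * (J m e * e) - a' * a * hKe + a' * hae * (J m e * e)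

theorem apply_idempotent_mul_commutator_eq_zero (hJ : IsJordanBiderivation_s13 J)
    (htf : ∀ x : A, x + x = 0 → x = 0) (he : IsIdempotentElem e) (hJe : J e e = 0)
    {a a' m : A} (ha : e * a * e = a) (ha' : e * a' * e = a') (hm : e * m * (1 - e) = m) :
    J m e * (a * a' - a' * a) = 0 := by
  have hea := he.mul_eq_of_mul_mul_eq ha
  have hae := he.mul_eq_of_mul_mul_eq' ha
  have hea' := he.mul_eq_of_mul_mul_eq ha'
  have hfa : (1 - e) * a = 0 := by rw [sub_mul, one_mul, hea, sub_self]
  have hKe := he.mul_mul_eq_zero_of_eq_add (hJ.apply_idempotent he m)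
  have hfP : (1 - e) * J a a' = 0 := by
    rw [sub_mul, one_mul, hJ.mul_apply_corner_corner htf he hJe ha ha', sub_self]
  have hW₁ : (1 - e) * J (a * m) a' * e = (1 - e) * J m e * a * a' := by
    rw [hJ.one_sub_mul_apply_corner_mul he (a * m) ha', hJ.apply_mul_idempotent he hJe ha hm]
    linear_combination (norm := noncomm_ring) hfa * (J m e * a')
  have hW₂ : (1 - e) * J (a * m) a' * e = (1 - e) * J m e * a' * a := by
    rw [hJ.apply_mul_corner htf he hJe ha ha' hm]
    linear_combination (norm := noncomm_ring) hfa * (J m a' * e)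
      + hfP * (m * e) + (1 - e) * J m a' * hae - (1 - e) * J m a' * hea
      + hJ.one_sub_mul_apply_corner_mul he m ha' * a
  linear_combination (norm := noncomm_ring) hW₂ - hW₁ + hKe * (a * a')
    - e * J m e * hea * a' - hKe * (a' * a) + e * J m e * hea' * a

end IsJordanBiderivation_s13

theorem jordan_biderivation_key_relations_general
    (R A : Type*) [CommRing R] [Ring A] [Algebra R A]
    -- `A` is 2-torsion free:
    (htf : ∀ x : A, x + x = 0 → x = 0)
    -- `e` is a nontrivial idempotent:
    (e : A) (he : e * e = e)
    (J : A →ₗ[R] A →ₗ[R] A)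
    -- `J` is a Jordan biderivation:
    (hJ1 : ∀ x y : A, J (x * x) y = x * J x y + J x y * x)
    (hJ2 : ∀ x y : A, J x (y * y) = y * J x y + J x y * y)
    -- `J(e, e) = 0`:
    (hJe : J e e = 0) :
    ∀ a a' m : A,
      e * a * e = a → e * a' * e = a' → e * m * (1 - e) = m →
      e * J m e * e = 0 ∧
      J (a * m) e = a * J m e + J m e * a ∧
      J a a' * m = (a' * a - a * a') * J m e ∧
      J m e * (a * a' - a' * a) = 0 := by
  intro a a' m ha ha' hm
  have he : IsIdempotentElem e := he
  have hJ : IsJordanBiderivation_s13 J := ⟨hJ1, hJ2⟩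
  exact ⟨he.mul_mul_eq_zero_of_eq_add (hJ.apply_idempotent he m),
    hJ.apply_mul_idempotent he hJe ha hm,
    hJ.apply_corner_mul htf he hJe ha ha' hm,
    hJ.apply_idempotent_mul_commutator_eq_zero htf he hJe ha ha' hm⟩

/-- Let `J : A × A → A` be a Jordan biderivation with `J(e,e) = 0`.
Then for all `a, a' ∈ A₁₁ = eAe` and `m ∈ A₁₂ = eAe'` (`e' = 1 - e`):
`eJ(m,e)e = 0`, `J(am,e) = aJ(m,e) + J(m,e)a`, `J(a,a')m = [a',a]J(m,e)` and
`J(m,e)[a,a'] = 0`. -/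
theorem jordan_biderivation_key_relations
    (R A : Type*) [CommRing R] [Ring A] [Algebra R A]
    -- `A` is 2-torsion free:
    (htf : ∀ x : A, x + x = 0 → x = 0)
    -- `e` is a nontrivial idempotent:
    (e : A) (he : e * e = e) (he0 : e ≠ 0) (he1 : e ≠ 1)
    (J : A →ₗ[R] A →ₗ[R] A)
    -- `J` is a Jordan biderivation:
    (hJ1 : ∀ x y : A, J (x * x) y = x * J x y + J x y * x)
    (hJ2 : ∀ x y : A, J x (y * y) = y * J x y + J x y * y)
    -- `J(e, e) = 0`:
    (hJe : J e e = 0) :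
    ∀ a a' m : A,
      e * a * e = a → e * a' * e = a' → e * m * (1 - e) = m →
      e * J m e * e = 0 ∧
      J (a * m) e = a * J m e + J m e * a ∧
      J a a' * m = (a' * a - a * a') * J m e ∧
      J m e * (a * a' - a' * a) = 0 :=
  jordan_biderivation_key_relations_general R A htf e he J hJ1 hJ2 hJe
end

section
/- Assume that e'Ae = {0} (so that A is a triangular algebra, isomorphic to Tri(eAe; eAe'; e'Ae')) and that the bimodule eAe' is faithful as a left eAe-module (for a ∈ eAe, a·eAe' = {0} implies a = 0) and as a right e'Ae'-module (for b ∈ e'Ae', eAe'·b = {0} implies b = 0). Then every Jordan biderivation J : A × A → A is a biderivation. -/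
/-!
Fixing one argument of `J` gives a Jordan derivation `D`, so it suffices that every Jordan
derivation of a 2-torsion free triangular ring with faithful bimodule is a derivation.
Since `D e = e * D e * e'`, subtracting the inner derivation `x ↦ x * D e - D e * x` we may
assume `D e = 0`. Linearizing `D (x * x)` then shows that `D` commutes with the Peirce
projections `x ↦ e x e, e x e', e' x e'`, so the Leibniz rule only has to be checked on products
of Peirce components. On `eAe · eAe'` and `eAe' · e'Ae'` it follows from the linearized identity,
the reversed products being zero. On `eAe · eAe` the Leibniz defect annihilates `eAe'` (expand
`D (a b m)` in two ways), hence vanishes by faithfulness, and symmetrically on `e'Ae' · e'Ae'`.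
-/

section JordanDerivation

variable {A : Type*} [Ring A]

def IsJordanDerivation (D : A →+ A) : Prop :=
  ∀ x, D (x * x) = x * D x + D x * x

theorem isJordanDerivation_mulRight_sub_mulLeft (c : A) :
    IsJordanDerivation (AddMonoidHom.mulRight c - AddMonoidHom.mulLeft c) := by
  intro x
  simp only [AddMonoidHom.sub_apply, AddMonoidHom.coe_mulRight, AddMonoidHom.coe_mulLeft]
  noncomm_ring

namespace IsJordanDerivation

variable {D : A →+ A} (hD : IsJordanDerivation D)
include hD

theorem sub {D' : A →+ A} (hD' : IsJordanDerivation D') : IsJordanDerivation (D - D') := by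
  intro x
  simp only [AddMonoidHom.sub_apply, hD x, hD' x]
  noncomm_ring

theorem map_one : D 1 = 0 := by
  have h := hD 1
  rw [one_mul, one_mul, mul_one] at h
  exact right_eq_add.mp h

theorem map_one_sub_eq_zero {e : A} (hDe : D e = 0) : D (1 - e) = 0 := by
  rw [map_sub, hD.map_one, hDe, sub_zero]

theorem map_mul_add_mul (x y : A) :
    D (x * y + y * x) = D x * y + x * D y + D y * x + y * D x := by
  have h := hD (x + y)
  rw [show (x + y) * (x + y) = x * x + (x * y + y * x) + y * y by noncomm_ring,
    map_add D (x * x + _), map_add D (x * x), map_add D x, hD x, hD y] at h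
  linear_combination (norm := noncomm_ring) h

theorem map_mul_of_mul_eq_zero {x y : A} (hyx : y * x = 0) (hDyx : D y * x = 0)
    (hyDx : y * D x = 0) : D (x * y) = D x * y + x * D y := by
  simpa [hyx, hDyx, hyDx] using hD.map_mul_add_mul x y

theorem map_mul_mul_of_isIdempotentElem (htf : ∀ x : A, x + x = 0 → x = 0) {e : A}
    (he : IsIdempotentElem e) (hDe : D e = 0) (y : A) : D (e * y * e) = e * D y * e := by
  have hs : e * (e * y + y * e) + (e * y + y * e) * e =
      e * y + y * e + (e * y * e + e * y * e) := by
    simp only [mul_add, add_mul, ← mul_assoc, he.eq, he.mul_mul_self]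
    abel
  have h := hD.map_mul_add_mul e (e * y + y * e)
  rw [hs, map_add D (e * y + y * e), map_add D (e * y * e), hD.map_mul_add_mul e y, hDe] at h
  simp only [mul_add, add_mul, ← mul_assoc, he.eq, he.mul_mul_self, zero_mul, mul_zero,
    add_zero, zero_add] at h
  exact sub_eq_zero.mp (htf _ (by linear_combination (norm := noncomm_ring) h))

end IsJordanDerivation

theorem IsIdempotentElem.one_sub_mul_mul {e : A} (he : IsIdempotentElem e) (x : A) :
    (1 - e) * (e * x) = 0 := by
  rw [← mul_assoc, he.one_sub_mul_self, zero_mul]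

section Triangular

variable {e : A}

theorem offdiag_mul_of_isIdempotentElem (he : IsIdempotentElem e) (x y : A) :
    e * (x * y) * (1 - e) =
      e * x * e * (e * y * (1 - e)) + e * x * (1 - e) * ((1 - e) * y * (1 - e)) := by
  linear_combination (norm := noncomm_ring)
    -(e * x) * he.eq * (y * (1 - e)) - (e * x) * he.one_sub.eq * (y * (1 - e))

theorem peirce_decomp_of_triangular (htri : ∀ x : A, (1 - e) * x * e = 0) (x : A) :
    x = e * x * e + e * x * (1 - e) + (1 - e) * x * (1 - e) := by
  linear_combination (norm := noncomm_ring) htri x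

theorem eq_of_peirce_of_triangular (htri : ∀ x : A, (1 - e) * x * e = 0) {u v : A}
    (h₁ : e * u * e = e * v * e) (h₂ : e * u * (1 - e) = e * v * (1 - e))
    (h₃ : (1 - e) * u * (1 - e) = (1 - e) * v * (1 - e)) : u = v := by
  rw [peirce_decomp_of_triangular htri u, peirce_decomp_of_triangular htri v, h₁, h₂, h₃]

theorem corner_mul_of_triangular (he : IsIdempotentElem e)
    (htri : ∀ x : A, (1 - e) * x * e = 0) (x y : A) :
    e * (x * y) * e = e * x * e * (e * y * e) := by
  linear_combination (norm := noncomm_ring) (e * x) * htri y - (e * x) * he.eq * (y * e)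

theorem corner_one_sub_mul_of_triangular (he : IsIdempotentElem e)
    (htri : ∀ x : A, (1 - e) * x * e = 0) (x y : A) :
    (1 - e) * (x * y) * (1 - e) = (1 - e) * x * (1 - e) * ((1 - e) * y * (1 - e)) := by
  linear_combination (norm := noncomm_ring)
    htri x * (y * (1 - e)) - ((1 - e) * x) * he.one_sub.eq * (y * (1 - e))

end Triangular

namespace IsJordanDerivation

variable {D : A →+ A} (hD : IsJordanDerivation D) {e : A} (he : IsIdempotentElem e)
  (htri : ∀ x : A, (1 - e) * x * e = 0)
include hD he htri

theorem map_idempotent_mul_eq_zero_of_triangular : D e * e = 0 := by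
  have h := hD e
  rw [he.eq] at h
  have hDee : e * D e * e = 0 := by
    have h' : e * D e * e = e * D e * e + e * D e * e := by
      conv_lhs => rw [h]
      simp only [mul_add, add_mul, ← mul_assoc, he.eq, he.mul_mul_self]
    exact right_eq_add.mp h'
  linear_combination (norm := noncomm_ring) hDee + htri (D e)

theorem mul_map_idempotent_of_triangular : e * D e = D e := by
  have h := hD e
  rw [he.eq, hD.map_idempotent_mul_eq_zero_of_triangular he htri, add_zero] at h
  exact h.symm

section MapEqZero

variable (htf : ∀ x : A, x + x = 0 → x = 0) (hDe : D e = 0)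
include htf hDe

theorem map_offdiag_of_triangular (x : A) : D (e * x * (1 - e)) = e * D x * (1 - e) := by
  have h := congrArg D (peirce_decomp_of_triangular htri x)
  rw [map_add, map_add, hD.map_mul_mul_of_isIdempotentElem htf he hDe,
    hD.map_mul_mul_of_isIdempotentElem htf he.one_sub (hD.map_one_sub_eq_zero hDe)] at h
  linear_combination (norm := noncomm_ring) peirce_decomp_of_triangular htri (D x) - h

theorem map_corner_mul_offdiag_of_triangular (x y : A) :
    D (e * x * e * (e * y * (1 - e))) =
      e * D x * e * (e * y * (1 - e)) + e * x * e * (e * D y * (1 - e)) := by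
  have hDx := hD.map_mul_mul_of_isIdempotentElem htf he hDe x
  have hDy := hD.map_offdiag_of_triangular he htri htf hDe y
  refine (hD.map_mul_of_mul_eq_zero ?_ ?_ ?_).trans ?_
  · simp only [mul_assoc, he.one_sub_mul_mul, mul_zero]
  · rw [hDy]; simp only [mul_assoc, he.one_sub_mul_mul, mul_zero]
  · rw [hDx]; simp only [mul_assoc, he.one_sub_mul_mul, mul_zero]
  · rw [hDx, hDy]

theorem map_offdiag_mul_corner_one_sub_of_triangular (x y : A) :
    D (e * x * (1 - e) * ((1 - e) * y * (1 - e))) =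
      e * D x * (1 - e) * ((1 - e) * y * (1 - e)) +
        e * x * (1 - e) * ((1 - e) * D y * (1 - e)) := by
  have hDx := hD.map_offdiag_of_triangular he htri htf hDe x
  have hDy := hD.map_mul_mul_of_isIdempotentElem htf he.one_sub (hD.map_one_sub_eq_zero hDe) y
  refine (hD.map_mul_of_mul_eq_zero ?_ ?_ ?_).trans ?_
  · simp only [mul_assoc, he.one_sub_mul_mul, mul_zero]
  · rw [hDy]; simp only [mul_assoc, he.one_sub_mul_mul, mul_zero]
  · rw [hDx]; simp only [mul_assoc, he.one_sub_mul_mul, mul_zero]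
  · rw [hDx, hDy]

theorem map_corner_mul_corner_of_triangular
    (hfl : ∀ x : A, (∀ y : A, (e * x * e) * (e * y * (1 - e)) = 0) → e * x * e = 0)
    (x y : A) :
    D (e * x * e * (e * y * e)) = e * D x * e * (e * y * e) + e * x * e * (e * D y * e) := by
  have hproj := hD.map_mul_mul_of_isIdempotentElem htf he hDe
  have hxy : e * x * e * (e * y * e) = e * (x * e * y) * e := by
    simp only [mul_assoc, he.mul_self_mul]
  set u := D (e * x * e * (e * y * e)) - (e * D x * e * (e * y * e) + e * x * e * (e * D y * e))
    with hu
  have hu_corner : u = e * (D (x * e * y) - (D x * e * y + x * e * D y)) * e := by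
    rw [hu, hxy, hproj]
    linear_combination (norm := noncomm_ring)
      -(e * D x) * he.eq * (y * e) - (e * x) * he.eq * (D y * e)
  have hu_ann : ∀ z, u * (e * z * (1 - e)) = 0 := by
    intro z
    have hyz : e * (y * e * z) * (1 - e) = e * y * e * (e * z * (1 - e)) := by
      simp only [mul_assoc, he.mul_self_mul]
    have h₁ := hD.map_corner_mul_offdiag_of_triangular he htri htf hDe (x * e * y) z
    have h₂ := hD.map_corner_mul_offdiag_of_triangular he htri htf hDe x (y * e * z)
    rw [← hproj, ← hxy, mul_assoc (e * x * e)] at h₁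
    rw [← hD.map_offdiag_of_triangular he htri htf hDe, hyz,
      hD.map_corner_mul_offdiag_of_triangular he htri htf hDe y z, h₁] at h₂
    rw [hu]
    linear_combination (norm := noncomm_ring) h₂
  rw [← sub_eq_zero, ← hu, hu_corner]
  exact hfl _ fun z => by rw [← hu_corner]; exact hu_ann z

theorem map_corner_one_sub_mul_corner_one_sub_of_triangular
    (hfr : ∀ x : A, (∀ y : A, (e * y * (1 - e)) * ((1 - e) * x * (1 - e)) = 0) →
      (1 - e) * x * (1 - e) = 0) (x y : A) :
    D ((1 - e) * x * (1 - e) * ((1 - e) * y * (1 - e))) =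
      (1 - e) * D x * (1 - e) * ((1 - e) * y * (1 - e)) +
        (1 - e) * x * (1 - e) * ((1 - e) * D y * (1 - e)) := by
  have hproj := hD.map_mul_mul_of_isIdempotentElem htf he.one_sub (hD.map_one_sub_eq_zero hDe)
  have hxy : (1 - e) * x * (1 - e) * ((1 - e) * y * (1 - e)) =
      (1 - e) * (x * (1 - e) * y) * (1 - e) := by
    simp only [mul_assoc, he.one_sub.mul_self_mul]
  set u := D ((1 - e) * x * (1 - e) * ((1 - e) * y * (1 - e))) -
    ((1 - e) * D x * (1 - e) * ((1 - e) * y * (1 - e)) +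
      (1 - e) * x * (1 - e) * ((1 - e) * D y * (1 - e))) with hu
  have hu_corner :
      u = (1 - e) * (D (x * (1 - e) * y) - (D x * (1 - e) * y + x * (1 - e) * D y)) * (1 - e) := by
    rw [hu, hxy, hproj]
    linear_combination (norm := noncomm_ring)
      -((1 - e) * D x) * he.one_sub.eq * (y * (1 - e)) -
        ((1 - e) * x) * he.one_sub.eq * (D y * (1 - e))
  have hu_ann : ∀ z, e * z * (1 - e) * u = 0 := by
    intro z
    have hzx :
        e * (z * (1 - e) * x) * (1 - e) = e * z * (1 - e) * ((1 - e) * x * (1 - e)) := by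
      simp only [mul_assoc, he.one_sub.mul_self_mul]
    have h₁ := hD.map_offdiag_mul_corner_one_sub_of_triangular he htri htf hDe z (x * (1 - e) * y)
    have h₂ := hD.map_offdiag_mul_corner_one_sub_of_triangular he htri htf hDe (z * (1 - e) * x) y
    rw [← hproj, ← hxy, ← mul_assoc (e * z * (1 - e))] at h₁
    rw [← hD.map_offdiag_of_triangular he htri htf hDe, hzx,
      hD.map_offdiag_mul_corner_one_sub_of_triangular he htri htf hDe z x, h₁] at h₂
    rw [hu]
    linear_combination (norm := noncomm_ring) h₂
  rw [← sub_eq_zero, ← hu, hu_corner]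
  exact hfr _ fun z => by rw [← hu_corner]; exact hu_ann z

theorem map_mul_of_map_eq_zero_of_triangular
    (hfl : ∀ x : A, (∀ y : A, (e * x * e) * (e * y * (1 - e)) = 0) → e * x * e = 0)
    (hfr : ∀ x : A, (∀ y : A, (e * y * (1 - e)) * ((1 - e) * x * (1 - e)) = 0) →
      (1 - e) * x * (1 - e) = 0) (x y : A) :
    D (x * y) = D x * y + x * D y := by
  have hproj := hD.map_mul_mul_of_isIdempotentElem htf he hDe
  have hproj' := hD.map_mul_mul_of_isIdempotentElem htf he.one_sub (hD.map_one_sub_eq_zero hDe)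
  have hoff := hD.map_offdiag_of_triangular he htri htf hDe
  refine eq_of_peirce_of_triangular htri ?_ ?_ ?_
  · rw [← hproj, corner_mul_of_triangular he htri,
      hD.map_corner_mul_corner_of_triangular he htri htf hDe hfl, mul_add, add_mul,
      corner_mul_of_triangular he htri, corner_mul_of_triangular he htri]
  · rw [← hoff, offdiag_mul_of_isIdempotentElem he, map_add,
      hD.map_corner_mul_offdiag_of_triangular he htri htf hDe,
      hD.map_offdiag_mul_corner_one_sub_of_triangular he htri htf hDe, mul_add, add_mul,
      offdiag_mul_of_isIdempotentElem he, offdiag_mul_of_isIdempotentElem he]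
    abel
  · rw [← hproj', corner_one_sub_mul_of_triangular he htri,
      hD.map_corner_one_sub_mul_corner_one_sub_of_triangular he htri htf hDe hfr, mul_add,
      add_mul,
      corner_one_sub_mul_of_triangular he htri, corner_one_sub_mul_of_triangular he htri]

end MapEqZero

theorem map_mul_of_triangular (htf : ∀ x : A, x + x = 0 → x = 0)
    (hfl : ∀ x : A, (∀ y : A, (e * x * e) * (e * y * (1 - e)) = 0) → e * x * e = 0)
    (hfr : ∀ x : A, (∀ y : A, (e * y * (1 - e)) * ((1 - e) * x * (1 - e)) = 0) →
      (1 - e) * x * (1 - e) = 0) (x y : A) :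
    D (x * y) = D x * y + x * D y := by
  have hE := hD.sub (isJordanDerivation_mulRight_sub_mulLeft (D e))
  have hEe : (D - (AddMonoidHom.mulRight (D e) - AddMonoidHom.mulLeft (D e))) e = 0 := by
    simp only [AddMonoidHom.sub_apply, AddMonoidHom.coe_mulRight, AddMonoidHom.coe_mulLeft,
      hD.mul_map_idempotent_of_triangular he htri,
      hD.map_idempotent_mul_eq_zero_of_triangular he htri]
    abel
  have h := hE.map_mul_of_map_eq_zero_of_triangular he htri htf hEe hfl hfr x y
  simp only [AddMonoidHom.sub_apply, AddMonoidHom.coe_mulRight, AddMonoidHom.coe_mulLeft] at h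
  linear_combination (norm := noncomm_ring) h

end IsJordanDerivation

end JordanDerivation

theorem jordan_biderivation_triangular_is_biderivation_general
    (R A : Type*) [CommRing R] [Ring A] [Algebra R A]
    -- `A` is 2-torsion free:
    (htf : ∀ x : A, x + x = 0 → x = 0)
    -- `e` is a nontrivial idempotent:
    (e : A) (he : e * e = e)
    -- `e'Ae = {0}` (triangularity):
    (htri : ∀ x : A, (1 - e) * x * e = 0)
    -- `eAe'` is a faithful left `eAe`-module:
    (hfl : ∀ x : A, (∀ y : A, (e * x * e) * (e * y * (1 - e)) = 0) → e * x * e = 0)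
    -- `eAe'` is a faithful right `e'Ae'`-module:
    (hfr : ∀ x : A, (∀ y : A, (e * y * (1 - e)) * ((1 - e) * x * (1 - e)) = 0) →
      (1 - e) * x * (1 - e) = 0)
    (J : A →ₗ[R] A →ₗ[R] A)
    -- `J` is a Jordan biderivation:
    (hJ1 : ∀ x y : A, J (x * x) y = x * J x y + J x y * x)
    (hJ2 : ∀ x y : A, J x (y * y) = y * J x y + J x y * y) :
    -- `J` is a biderivation:
    (∀ x y z : A, J (x * y) z = J x z * y + x * J y z) ∧
    (∀ x y z : A, J z (x * y) = J z x * y + x * J z y) := by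
  have hJleft (z : A) : IsJordanDerivation (J.flip z).toAddMonoidHom := fun x => hJ1 x z
  have hJright (z : A) : IsJordanDerivation (J z).toAddMonoidHom := fun y => hJ2 z y
  exact ⟨fun x y z => (hJleft z).map_mul_of_triangular he htri htf hfl hfr x y,
    fun x y z => (hJright z).map_mul_of_triangular he htri htf hfl hfr x y⟩

/-- Assume `e'Ae = {0}` (so `A` is a triangular algebra, isomorphic to
`Tri(eAe; eAe'; e'Ae')`) and that the bimodule `eAe'` is faithful as a left
`eAe`-module and as a right `e'Ae'`-module.  Then every Jordan biderivation
`J : A × A → A` is a biderivation. -/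
theorem jordan_biderivation_triangular_is_biderivation
    (R A : Type*) [CommRing R] [Ring A] [Algebra R A]
    -- `A` is 2-torsion free:
    (htf : ∀ x : A, x + x = 0 → x = 0)
    -- `e` is a nontrivial idempotent:
    (e : A) (he : e * e = e) (he0 : e ≠ 0) (he1 : e ≠ 1)
    -- `e'Ae = {0}` (triangularity):
    (htri : ∀ x : A, (1 - e) * x * e = 0)
    -- `eAe'` is a faithful left `eAe`-module:
    (hfl : ∀ x : A, (∀ y : A, (e * x * e) * (e * y * (1 - e)) = 0) → e * x * e = 0)
    -- `eAe'` is a faithful right `e'Ae'`-module: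
    (hfr : ∀ x : A, (∀ y : A, (e * y * (1 - e)) * ((1 - e) * x * (1 - e)) = 0) →
      (1 - e) * x * (1 - e) = 0)
    (J : A →ₗ[R] A →ₗ[R] A)
    -- `J` is a Jordan biderivation:
    (hJ1 : ∀ x y : A, J (x * x) y = x * J x y + J x y * x)
    (hJ2 : ∀ x y : A, J x (y * y) = y * J x y + J x y * y) :
    -- `J` is a biderivation:
    (∀ x y z : A, J (x * y) z = J x z * y + x * J y z) ∧
    (∀ x y z : A, J z (x * y) = J z x * y + x * J z y) :=
  jordan_biderivation_triangular_is_biderivation_general R A htf e he htri hfl hfr J hJ1 hJ2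
end
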